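/- arXiv:1611.10220 — 6 statements merged into one kernel-verified Lean document; each statement's English description precedes it below -/
import Mathlib

section
/- Let A = [[a,b],[c,d]] ∈ GL_2(F) with det(A) = 1 and b·c ≠ 0, where F is an algebraically closed field, and let D be the order of [A] in PGL_2(F). For n ∈ ℕ, let (a_n, b_n) be the first row of A^n. Then for any 0 ≤ k < n < D, the vectors (a_n, b_n) and (a_k, b_k) are linearly independent over F. -/
open Matrix

theorem stmt_4 {F : Type*} [Field F] [IsAlgClosed F]
    (A : Matrix.GeneralLinearGroup (Fin 2) F)
    (hdet : (A : Matrix (Fin 2) (Fin 2) F).det = 1)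
    (hbc : (A : Matrix (Fin 2) (Fin 2) F) 0 1 * (A : Matrix (Fin 2) (Fin 2) F) 1 0 ≠ 0)
    (D : ℕ)
    (hD : D = orderOf (QuotientGroup.mk A :
        Matrix.GeneralLinearGroup (Fin 2) F ⧸ Subgroup.center (Matrix.GeneralLinearGroup (Fin 2) F))) :
    ∀ k n : ℕ, k < n → n < D →
      LinearIndependent F
        ![fun j => ((A ^ n : Matrix.GeneralLinearGroup (Fin 2) F) : Matrix (Fin 2) (Fin 2) F) 0 j,
          fun j => ((A ^ k : Matrix.GeneralLinearGroup (Fin 2) F) : Matrix (Fin 2) (Fin 2) F) 0 j] := by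
  intro k n hkn hnD
  have hb : (A : Matrix (Fin 2) (Fin 2) F) 0 1 ≠ 0 := left_ne_zero_of_mul hbc
  -- Key: for 0 < m < D, the (0,1) entry of A^m is nonzero.
  have key : ∀ m : ℕ, 0 < m → m < D →
      ((A ^ m : Matrix.GeneralLinearGroup (Fin 2) F) : Matrix (Fin 2) (Fin 2) F) 0 1 ≠ 0 := by
    intro m hm hmD h01
    set M := ((A ^ m : Matrix.GeneralLinearGroup (Fin 2) F) : Matrix (Fin 2) (Fin 2) F) with hM
    set P := (A : Matrix (Fin 2) (Fin 2) F) with hP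
    have hcomm : M * P = P * M := by
      have h := ((Commute.refl A).pow_left m)
      have := congrArg (Units.val) h
      simpa [hM, hP] using this
    have h01' := congrFun (congrFun hcomm 0) 1
    have h11' := congrFun (congrFun hcomm 1) 1
    simp only [Matrix.mul_apply, Fin.sum_univ_two] at h01' h11'
    rw [h01] at h01' h11'
    have hMd : M 0 0 = M 1 1 := mul_left_cancel₀ hb (by linear_combination h01')
    have hM10 : M 1 0 = 0 := by
      have : M 1 0 * P 0 1 = 0 := by linear_combination h11'
      rcases mul_eq_zero.mp this with h | h
      · exact h
      · exact absurd h hb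
    -- M is scalar
    have hscalar : M = M 0 0 • (1 : Matrix (Fin 2) (Fin 2) F) := by
      ext i j
      fin_cases i <;> fin_cases j <;>
        simp [h01, hM10, hMd, Matrix.one_apply]
    have hcenter : (A ^ m) ∈ Subgroup.center (Matrix.GeneralLinearGroup (Fin 2) F) := by
      rw [Subgroup.mem_center_iff]
      intro g
      apply Units.ext
      have : (g : Matrix (Fin 2) (Fin 2) F) * M = M * (g : Matrix (Fin 2) (Fin 2) F) := by
        rw [hscalar, Matrix.mul_smul, Matrix.smul_mul, Matrix.mul_one, Matrix.one_mul]
      simpa [hM] using this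
    have hpow : (QuotientGroup.mk A :
        Matrix.GeneralLinearGroup (Fin 2) F ⧸ Subgroup.center (Matrix.GeneralLinearGroup (Fin 2) F)) ^ m = 1 := by
      rw [← QuotientGroup.mk_pow, QuotientGroup.eq_one_iff]
      exact hcenter
    have hdvd : D ∣ m := hD ▸ orderOf_dvd_of_pow_eq_one hpow
    exact absurd (Nat.le_of_dvd hm hdvd) (by omega)
  rw [LinearIndependent.pair_iff]
  intro s t hst
  set N := ((A ^ (n - k) : Matrix.GeneralLinearGroup (Fin 2) F) : Matrix (Fin 2) (Fin 2) F) with hN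
  set C := ((A ^ k : Matrix.GeneralLinearGroup (Fin 2) F) : Matrix (Fin 2) (Fin 2) F) with hC
  have hNC : ((A ^ n : Matrix.GeneralLinearGroup (Fin 2) F) : Matrix (Fin 2) (Fin 2) F) = N * C := by
    have : A ^ n = A ^ (n - k) * A ^ k := by
      rw [← pow_add]; congr 1; omega
    rw [this]; rfl
  have hj : ∀ j, s * (N 0 0 * C 0 j + N 0 1 * C 1 j) + t * C 0 j = 0 := by
    intro j
    have := congrFun hst j
    simp only [Pi.add_apply, Pi.smul_apply, smul_eq_mul, Pi.zero_apply, hNC,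
      Matrix.mul_apply, Fin.sum_univ_two] at this
    convert this using 2
  have hu : (![s * N 0 0 + t, s * N 0 1] : Fin 2 → F) ᵥ* C = 0 := by
    ext j
    simp only [Matrix.vecMul, dotProduct, Fin.sum_univ_two, Pi.zero_apply]
    simp only [Matrix.cons_val_zero, Matrix.cons_val_one, Matrix.head_cons]
    linear_combination hj j
  have hu0 : (![s * N 0 0 + t, s * N 0 1] : Fin 2 → F) = 0 := by
    have h2 := congrArg (fun v => v ᵥ* (((A ^ k)⁻¹ : Matrix.GeneralLinearGroup (Fin 2) F) : Matrix (Fin 2) (Fin 2) F)) hu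
    simp only [Matrix.vecMul_vecMul, Matrix.zero_vecMul] at h2
    have hCC : C * (((A ^ k)⁻¹ : Matrix.GeneralLinearGroup (Fin 2) F) : Matrix (Fin 2) (Fin 2) F) = 1 := by
      rw [hC, ← Units.val_mul, mul_inv_cancel (A ^ k), Units.val_one]
    rwa [hCC, Matrix.vecMul_one] at h2
  have h1 : s * N 0 0 + t = 0 := by simpa using congrFun hu0 0
  have h2 : s * N 0 1 = 0 := by simpa using congrFun hu0 1
  by_cases hs : s = 0
  · constructor
    · exact hs
    · rw [hs] at h1; simpa using h1
  · exfalso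
    have hN01 : N 0 1 = 0 := by
      rcases mul_eq_zero.mp h2 with h | h
      · exact absurd h hs
      · exact h
    exact key (n - k) (by omega) (by omega) hN01
end

section
/- Let A = [[a,b],[c,d]] ∈ GL_2(F) with det(A) = 1 and b·c ≠ 0, where F is an algebraically closed field, and let D be the order of [A] in PGL_2(F). For n ∈ ℕ, let (c_n, d_n) be the second row of A^n. Then for any 0 ≤ k < n < D, the vectors (c_n, d_n) and (c_k, d_k) are linearly independent over F. -/
open Matrix

theorem stmt_5 {F : Type*} [Field F] [IsAlgClosed F]
    (A : Matrix.GeneralLinearGroup (Fin 2) F)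
    (hdet : (A : Matrix (Fin 2) (Fin 2) F).det = 1)
    (hbc : (A : Matrix (Fin 2) (Fin 2) F) 0 1 * (A : Matrix (Fin 2) (Fin 2) F) 1 0 ≠ 0)
    (D : ℕ)
    (hD : D = orderOf (QuotientGroup.mk A :
        Matrix.GeneralLinearGroup (Fin 2) F ⧸ Subgroup.center (Matrix.GeneralLinearGroup (Fin 2) F))) :
    ∀ k n : ℕ, k < n → n < D →
      LinearIndependent F
        ![fun j => ((A ^ n : Matrix.GeneralLinearGroup (Fin 2) F) : Matrix (Fin 2) (Fin 2) F) 1 j,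
          fun j => ((A ^ k : Matrix.GeneralLinearGroup (Fin 2) F) : Matrix (Fin 2) (Fin 2) F) 1 j] := by
  intro k n hkn hnD
  set M : Matrix (Fin 2) (Fin 2) F := (A : Matrix (Fin 2) (Fin 2) F) with hM
  have hc : M 1 0 ≠ 0 := fun h => hbc (by rw [h, mul_zero])
  set m := n - k with hm
  have hm0 : 0 < m := Nat.sub_pos_of_lt hkn
  have hmD : m < D := lt_of_le_of_lt (Nat.sub_le n k) hnD
  have hpow : ∀ j : ℕ, ((A ^ j : Matrix.GeneralLinearGroup (Fin 2) F) :
      Matrix (Fin 2) (Fin 2) F) = M ^ j := fun j => Units.val_pow_eq_pow_val A j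
  -- key: (M ^ m) 1 0 ≠ 0
  have hcm : (M ^ m) 1 0 ≠ 0 := by
    intro h0
    set N : Matrix (Fin 2) (Fin 2) F := M ^ m with hN
    have hcomm : N * M = M * N := by
      rw [hN, ← pow_succ, ← pow_succ']
    have h10 : N 1 1 * M 1 0 = M 1 0 * N 0 0 := by
      have := congrFun (congrFun hcomm 1) 0
      simp only [Matrix.mul_apply, Fin.sum_univ_two, h0] at this
      linear_combination this
    have h00 : N 0 1 * M 1 0 = 0 := by
      have := congrFun (congrFun hcomm 0) 0
      simp only [Matrix.mul_apply, Fin.sum_univ_two, h0] at this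
      linear_combination this
    have hN01 : N 0 1 = 0 := by
      rcases mul_eq_zero.mp h00 with h | h
      · exact h
      · exact absurd h hc
    have hN00 : N 0 0 = N 1 1 := by
      have := h10
      rw [mul_comm (N 1 1) (M 1 0)] at this
      exact (mul_left_cancel₀ hc this).symm
    have hscalar : N = N 1 1 • (1 : Matrix (Fin 2) (Fin 2) F) := by
      ext i j
      fin_cases i <;> fin_cases j <;>
        simp [Matrix.one_apply, hN01, hN00, h0]
    -- A ^ m is central
    have hcentral : (A ^ m) ∈ Subgroup.center (Matrix.GeneralLinearGroup (Fin 2) F) := by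
      rw [Subgroup.mem_center_iff]
      intro g
      ext : 1
      show (g : Matrix (Fin 2) (Fin 2) F) * ((A ^ m : Matrix.GeneralLinearGroup (Fin 2) F) :
        Matrix (Fin 2) (Fin 2) F) = ((A ^ m : Matrix.GeneralLinearGroup (Fin 2) F) :
        Matrix (Fin 2) (Fin 2) F) * (g : Matrix (Fin 2) (Fin 2) F)
      rw [hpow m, ← hN, hscalar, mul_smul_comm, smul_mul_assoc, mul_one, one_mul]
    have hone : (QuotientGroup.mk A : Matrix.GeneralLinearGroup (Fin 2) F ⧸
        Subgroup.center (Matrix.GeneralLinearGroup (Fin 2) F)) ^ m = 1 := by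
      rw [← QuotientGroup.mk_pow]
      exact (QuotientGroup.eq_one_iff _).mpr hcentral
    have : D ≤ m := hD ▸ Nat.le_of_dvd hm0 (orderOf_dvd_of_pow_eq_one hone)
    omega
  -- entries
  have hsplit : M ^ n = M ^ m * M ^ k := by
    rw [← pow_add]
    congr 1
    omega
  have hdetk : (M ^ k).det = 1 := by rw [Matrix.det_pow, hM, hdet, one_pow]
  have hdetk2 : (M ^ k) 0 0 * (M ^ k) 1 1 - (M ^ k) 0 1 * (M ^ k) 1 0 = 1 := by
    rw [← Matrix.det_fin_two, hdetk]
  have hcn : (M ^ n) 1 0 = (M ^ m) 1 0 * (M ^ k) 0 0 + (M ^ m) 1 1 * (M ^ k) 1 0 := by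
    rw [hsplit]; simp [Matrix.mul_apply, Fin.sum_univ_two]
  have hdn : (M ^ n) 1 1 = (M ^ m) 1 0 * (M ^ k) 0 1 + (M ^ m) 1 1 * (M ^ k) 1 1 := by
    rw [hsplit]; simp [Matrix.mul_apply, Fin.sum_univ_two]
  have hkey : (M ^ n) 1 0 * (M ^ k) 1 1 - (M ^ n) 1 1 * (M ^ k) 1 0 = (M ^ m) 1 0 := by
    rw [hcn, hdn]
    linear_combination (M ^ m) 1 0 * hdetk2
  rw [LinearIndependent.pair_iff]
  intro s t hst
  have h0 := congrFun hst 0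
  have h1 := congrFun hst 1
  simp only [hpow, Pi.add_apply, Pi.smul_apply, Pi.zero_apply, smul_eq_mul] at h0 h1
  have hs : s = 0 := by
    have : s * (M ^ m) 1 0 = 0 := by
      rw [← hkey]; linear_combination (M ^ k) 1 1 * h0 - (M ^ k) 1 0 * h1
    rcases mul_eq_zero.mp this with h | h
    · exact h
    · exact absurd h hcm
  have hrow : ¬((M ^ k) 1 0 = 0 ∧ (M ^ k) 1 1 = 0) := by
    rintro ⟨h10, h11⟩
    rw [h10, h11] at hdetk2
    simp at hdetk2
  have ht : t = 0 := by
    by_contra htne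
    rw [hs] at h0 h1
    rw [zero_mul, zero_add] at h0 h1
    exact hrow ⟨by rcases mul_eq_zero.mp h0 with h | h; exact absurd h htne; exact h,
      by rcases mul_eq_zero.mp h1 with h | h; exact absurd h htne; exact h⟩
  exact ⟨hs, ht⟩
end

section
/- Let A = [[a,0],[c,d]] ∈ GL_2(F) be lower triangular with c ≠ 0, where F is a field, and let D be the order of [A] in PGL_2(F), assumed finite. For n ∈ ℕ, let (c_n, d_n) := (0,1)·A^n be the second row of A^n. Then for any 0 ≤ k < n < D, the vectors (c_n, d_n) and (c_k, d_k) are linearly independent over F. -/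
open Matrix

lemma pow_form {F : Type*} [Field F] (a c d : F) :
    ∀ n : ℕ, ∃ cn : F, (!![a, 0; c, d] : Matrix (Fin 2) (Fin 2) F) ^ n = !![a ^ n, 0; cn, d ^ n]
      ∧ cn * (a - d) = c * (a ^ n - d ^ n) := by
  intro n
  induction n with
  | zero => exact ⟨0, by simp [Matrix.one_fin_two], by ring⟩
  | succ n ih =>
    obtain ⟨cn, h1, h2⟩ := ih
    refine ⟨c * a ^ n + d * cn, ?_, ?_⟩
    · rw [pow_succ', h1, pow_succ, pow_succ]
      ext i j
      fin_cases i <;> fin_cases j <;>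
        simp [Matrix.mul_apply, Fin.sum_univ_succ] <;> ring
    · linear_combination d * h2

theorem stmt_8 {F : Type*} [Field F] (a c d : F)
    (A : Matrix.GeneralLinearGroup (Fin 2) F)
    (hA : (A : Matrix (Fin 2) (Fin 2) F) = !![a, 0; c, d])
    (hc : c ≠ 0)
    (D : ℕ)
    (hD : D = orderOf (QuotientGroup.mk A :
        Matrix.GeneralLinearGroup (Fin 2) F ⧸ Subgroup.center (Matrix.GeneralLinearGroup (Fin 2) F)))
    (hDfin : 0 < D) :
    ∀ k n : ℕ, k < n → n < D →
      LinearIndependent F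
        ![fun j => ((A ^ n : Matrix.GeneralLinearGroup (Fin 2) F) : Matrix (Fin 2) (Fin 2) F) 1 j,
          fun j => ((A ^ k : Matrix.GeneralLinearGroup (Fin 2) F) : Matrix (Fin 2) (Fin 2) F) 1 j] := by
  intro k n hkn hnD
  have hdetA : IsUnit ((A : Matrix (Fin 2) (Fin 2) F).det) :=
    (Matrix.isUnit_iff_isUnit_det _).mp A.isUnit
  have hdet : (A : Matrix (Fin 2) (Fin 2) F).det = a * d := by
    rw [hA]; simp [Matrix.det_fin_two]
  have had : a * d ≠ 0 := by rw [← hdet]; exact hdetA.ne_zero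
  have ha : a ≠ 0 := fun h => had (by simp [h])
  have hd : d ≠ 0 := fun h => had (by simp [h])
  have hpow : ∀ m : ℕ, ((A ^ m : Matrix.GeneralLinearGroup (Fin 2) F) : Matrix (Fin 2) (Fin 2) F)
      = (!![a, 0; c, d] : Matrix (Fin 2) (Fin 2) F) ^ m := by
    intro m; rw [← hA]; exact Units.val_pow_eq_pow_val A m
  have key : ∀ m : ℕ, 0 < m → m < D → ∀ cm : F,
      (!![a, 0; c, d] : Matrix (Fin 2) (Fin 2) F) ^ m = !![a ^ m, 0; cm, d ^ m] →
      cm * (a - d) = c * (a ^ m - d ^ m) → cm ≠ 0 := by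
    intro m hm hmD cm hmat hrel hcm0
    have haeq : a ^ m = d ^ m := by
      by_cases had' : a = d
      · rw [had']
      · have h0 : c * (a ^ m - d ^ m) = 0 := by rw [← hrel, hcm0, zero_mul]
        exact sub_eq_zero.mp ((mul_eq_zero.mp h0).resolve_left hc)
    have hscalar : ((A ^ m : Matrix.GeneralLinearGroup (Fin 2) F) : Matrix (Fin 2) (Fin 2) F)
        = a ^ m • (1 : Matrix (Fin 2) (Fin 2) F) := by
      rw [hpow, hmat, hcm0, ← haeq]
      ext i j
      fin_cases i <;> fin_cases j <;> simp [Matrix.one_apply]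
    have hcenter : A ^ m ∈ Subgroup.center (Matrix.GeneralLinearGroup (Fin 2) F) := by
      rw [Subgroup.mem_center_iff]
      intro g
      ext : 1
      rw [Units.val_mul, Units.val_mul, hscalar, smul_mul_assoc, mul_smul_comm, one_mul, mul_one]
    have hone : (QuotientGroup.mk A :
        Matrix.GeneralLinearGroup (Fin 2) F ⧸ Subgroup.center (Matrix.GeneralLinearGroup (Fin 2) F)) ^ m = 1 := by
      rw [← QuotientGroup.mk_pow]
      exact (QuotientGroup.eq_one_iff _).mpr hcenter
    have hdvd := orderOf_dvd_of_pow_eq_one hone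
    rw [← hD] at hdvd
    exact absurd (Nat.le_of_dvd hm hdvd) (not_le.mpr hmD)
  obtain ⟨cn, hn1, _⟩ := pow_form a c d n
  obtain ⟨ck, hk1, _⟩ := pow_form a c d k
  obtain ⟨cm, hm1, hm2⟩ := pow_form a c d (n - k)
  have hm : 0 < n - k := Nat.sub_pos_of_lt hkn
  have hmD : n - k < D := lt_of_le_of_lt (Nat.sub_le n k) hnD
  have hcm : cm ≠ 0 := key (n - k) hm hmD cm hm1 hm2
  have hsplit : (!![a, 0; c, d] : Matrix (Fin 2) (Fin 2) F) ^ n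
      = (!![a, 0; c, d] : Matrix (Fin 2) (Fin 2) F) ^ (n - k)
        * (!![a, 0; c, d] : Matrix (Fin 2) (Fin 2) F) ^ k := by
    rw [← pow_add, Nat.sub_add_cancel hkn.le]
  rw [hn1, hm1, hk1] at hsplit
  have hcn : cn = cm * a ^ k + d ^ (n - k) * ck := by
    have := congrFun (congrFun hsplit 1) 0
    simpa [Matrix.mul_apply, Fin.sum_univ_succ] using this
  have hdn : d ^ n = d ^ (n - k) * d ^ k := by
    rw [← pow_add, Nat.sub_add_cancel hkn.le]
  have hdk : (d : F) ^ k ≠ 0 := pow_ne_zero _ hd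
  have hak : (a : F) ^ k ≠ 0 := pow_ne_zero _ ha
  have hv : (fun j => ((A ^ n : Matrix.GeneralLinearGroup (Fin 2) F) : Matrix (Fin 2) (Fin 2) F) 1 j)
      = ![cn, d ^ n] := by
    funext j; rw [hpow, hn1]; fin_cases j <;> simp
  have hw : (fun j => ((A ^ k : Matrix.GeneralLinearGroup (Fin 2) F) : Matrix (Fin 2) (Fin 2) F) 1 j)
      = ![ck, d ^ k] := by
    funext j; rw [hpow, hk1]; fin_cases j <;> simp
  rw [hv, hw, LinearIndependent.pair_iff]
  intro s t hst
  have h0 := congrFun hst 0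
  have h1 := congrFun hst 1
  simp only [Pi.add_apply, Pi.smul_apply, smul_eq_mul, Matrix.cons_val_zero, Matrix.cons_val_one,
    Matrix.head_cons, Pi.zero_apply] at h0 h1
  have hΔ : cn * d ^ k - ck * d ^ n = cm * (a ^ k * d ^ k) := by
    rw [hcn, hdn]; ring
  have hΔ0 : cn * d ^ k - ck * d ^ n ≠ 0 := by
    rw [hΔ]; exact mul_ne_zero hcm (mul_ne_zero hak hdk)
  have hs : s * (cn * d ^ k - ck * d ^ n) = 0 := by
    linear_combination d ^ k * h0 - ck * h1
  have hs0 : s = 0 := (mul_eq_zero.mp hs).resolve_right hΔ0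
  refine ⟨hs0, ?_⟩
  rw [hs0, zero_mul, zero_add] at h1
  exact (mul_eq_zero.mp h1).resolve_right hdk
end

section
/- Let A ∈ GL_2(F) with det(A) = 1 and A^D = (-1)^{D+1}·I where D = ord([A]) in PGL_2(F). Denote by (a_n,b_n) and (c_n,d_n) the first and second rows of A^n respectively. Suppose (c_n, d_n) = γ·(a_k, b_k) for some 0 ≤ k, n < D with k ≠ n and some γ ∈ F*. Set g = n − k. Then for every 0 ≤ i ≤ D−1, (c_i, d_i) = ε_i·γ·(a_{i−g mod D}, b_{i−g mod D}) for some sign ε_i ∈ {−1, 1}. -/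
open Matrix

private lemma toNat_emod_eq' (x : ℤ) (D r : ℕ) (hr : r < D)
    (h : x = r ∨ x = (r:ℤ) + D ∨ x = (r:ℤ) - D) : (x % (D:ℤ)).toNat = r := by
  have h0 : ((r:ℤ)) % (D:ℤ) = r :=
    Int.emod_eq_of_lt (by positivity) (by exact_mod_cast hr)
  rcases h with h | h | h <;> subst h
  · rw [h0]; simp
  · rw [show (r:ℤ) + D = r + 1 * D by ring, Int.add_mul_emod_self_right, h0]; simp
  · rw [show (r:ℤ) - D = r + (-1) * D by ring, Int.add_mul_emod_self_right, h0]; simp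

theorem stmt_10 {F : Type*} [Field F]
    (A : Matrix.GeneralLinearGroup (Fin 2) F)
    (hdet : (A : Matrix (Fin 2) (Fin 2) F).det = 1)
    (D : ℕ)
    (hD : D = orderOf (QuotientGroup.mk A :
        Matrix.GeneralLinearGroup (Fin 2) F ⧸ Subgroup.center (Matrix.GeneralLinearGroup (Fin 2) F)))
    (hDfin : 0 < D)
    (hAD : (A : Matrix (Fin 2) (Fin 2) F) ^ D = ((-1 : F) ^ (D + 1)) • 1)
    (k n : ℕ) (hk : k < D) (hn : n < D) (hkn : k ≠ n)
    (γ : F) (hγ : γ ≠ 0)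
    (hdep : ∀ j, ((A ^ n : Matrix.GeneralLinearGroup (Fin 2) F) : Matrix (Fin 2) (Fin 2) F) 1 j
      = γ * ((A ^ k : Matrix.GeneralLinearGroup (Fin 2) F) : Matrix (Fin 2) (Fin 2) F) 0 j) :
    ∀ i : ℕ, i ≤ D - 1 →
      ∃ ε : F, (ε = 1 ∨ ε = -1) ∧
        ∀ j, ((A ^ i : Matrix.GeneralLinearGroup (Fin 2) F) : Matrix (Fin 2) (Fin 2) F) 1 j
          = ε * γ *
            ((A ^ ((((i : ℤ) - ((n : ℤ) - (k : ℤ))) % (D : ℤ)).toNat) :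
                Matrix.GeneralLinearGroup (Fin 2) F) : Matrix (Fin 2) (Fin 2) F) 0 j := by
  set s : F := (-1 : F) ^ (D + 1) with hs
  have hs1 : s = 1 ∨ s = -1 := neg_one_pow_eq_or F (D + 1)
  have hss : s * s = 1 := by rcases hs1 with h | h <;> rw [h] <;> ring
  have hcoe : ∀ p : ℕ, ((A ^ p : Matrix.GeneralLinearGroup (Fin 2) F) : Matrix (Fin 2) (Fin 2) F)
      = ((A : Matrix (Fin 2) (Fin 2) F)) ^ p := fun p => Units.val_pow_eq_pow_val A p
  -- periodicity
  have hper : ∀ u : ℕ, ((A : Matrix (Fin 2) (Fin 2) F)) ^ (u + D) =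
      s • ((A : Matrix (Fin 2) (Fin 2) F)) ^ u := by
    intro u
    rw [pow_add, hAD, Matrix.mul_smul, Matrix.mul_one]
  -- L1 : shifted dependency
  have hL1 : ∀ (t : ℕ) (j : Fin 2),
      (((A : Matrix (Fin 2) (Fin 2) F)) ^ (n + t)) 1 j
        = γ * (((A : Matrix (Fin 2) (Fin 2) F)) ^ (k + t)) 0 j := by
    intro t j
    rw [pow_add, pow_add, Matrix.mul_apply, Matrix.mul_apply, Finset.mul_sum]
    refine Finset.sum_congr rfl fun l _ => ?_
    have := hdep l
    rw [hcoe, hcoe] at this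
    rw [this, mul_assoc]
  -- key step
  have key : ∀ (i m t a b : ℕ), a ≤ 1 → b ≤ 1 → n + t = i + a * D → k + t = m + b * D →
      ∃ ε : F, (ε = 1 ∨ ε = -1) ∧
        ∀ j, (((A : Matrix (Fin 2) (Fin 2) F)) ^ i) 1 j
          = ε * γ * (((A : Matrix (Fin 2) (Fin 2) F)) ^ m) 0 j := by
    intro i m t a b ha hb h1 h2
    have hsa : s ^ a * s ^ a = 1 := by
      interval_cases a <;> simp [hss]
    refine ⟨s ^ a * s ^ b, ?_, ?_⟩
    · rcases hs1 with h | h <;> rw [h] <;> interval_cases a <;> interval_cases b <;> simp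
    · intro j
      have e1 : ((A : Matrix (Fin 2) (Fin 2) F)) ^ (n + t) =
          s ^ a • ((A : Matrix (Fin 2) (Fin 2) F)) ^ i := by
        rw [h1]; interval_cases a
        · simp
        · rw [one_mul, hper, pow_one]
      have e2 : ((A : Matrix (Fin 2) (Fin 2) F)) ^ (k + t) =
          s ^ b • ((A : Matrix (Fin 2) (Fin 2) F)) ^ m := by
        rw [h2]; interval_cases b
        · simp
        · rw [one_mul, hper, pow_one]
      have e3 := hL1 t j
      rw [e1, e2, Matrix.smul_apply, Matrix.smul_apply, smul_eq_mul, smul_eq_mul] at e3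
      have e4 : s ^ a * (s ^ a * (((A : Matrix (Fin 2) (Fin 2) F)) ^ i) 1 j)
          = s ^ a * (γ * (s ^ b * (((A : Matrix (Fin 2) (Fin 2) F)) ^ m) 0 j)) := by rw [e3]
      rw [← mul_assoc, hsa, one_mul] at e4
      rw [e4]; ring
  intro i hi
  have hi' : i < D := by omega
  simp only [hcoe]
  -- four cases
  rcases le_or_gt n i with hni | hni
  · rcases lt_or_ge (k + i - n) D with hc | hc
    · -- t = i - n, a = 0, m = k + i - n, b = 0
      have hm : ((((i : ℤ) - ((n : ℤ) - (k : ℤ))) % (D : ℤ)).toNat) = k + i - n := by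
        apply toNat_emod_eq' _ _ _ (by omega)
        left; push_cast; omega
      rw [hm]
      exact key i (k + i - n) (i - n) 0 0 (by omega) (by omega) (by omega) (by omega)
    · -- m = k + i - n - D, b = 1
      have hm : ((((i : ℤ) - ((n : ℤ) - (k : ℤ))) % (D : ℤ)).toNat) = k + i - n - D := by
        apply toNat_emod_eq' _ _ _ (by omega)
        right; left; push_cast; omega
      rw [hm]
      exact key i (k + i - n - D) (i - n) 0 1 (by omega) (by omega) (by omega) (by omega)
  · rcases le_or_gt n (k + i) with hc | hc
    · -- t = i + D - n, a = 1, m = k + i - n, b = 1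
      have hm : ((((i : ℤ) - ((n : ℤ) - (k : ℤ))) % (D : ℤ)).toNat) = k + i - n := by
        apply toNat_emod_eq' _ _ _ (by omega)
        left; push_cast; omega
      rw [hm]
      exact key i (k + i - n) (i + D - n) 1 1 (by omega) (by omega) (by omega) (by omega)
    · -- m = k + i + D - n, b = 0
      have hm : ((((i : ℤ) - ((n : ℤ) - (k : ℤ))) % (D : ℤ)).toNat) = k + i + D - n := by
        apply toNat_emod_eq' _ _ _ (by omega)
        right; right; push_cast; omega
      rw [hm]
      exact key i (k + i + D - n) (i + D - n) 1 0 (by omega) (by omega) (by omega) (by omega)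
end

section
/- For integers s, t ≥ 0, D ≥ 1 and 0 ≤ m < D, let I_{s,t,m} be the set of integer vectors (u_0,…,u_{D−1}) ∈ ℤ^D whose first m coordinates are zero, such that the sum of the positive coordinates is at most s and the sum of the absolute values of the negative coordinates is at most t. Then |I_{s,t,m}| = Σ_{i=0}^{D−m} C(D−m, i)·C(s, i)·C(D−m−i+t, t). -/
/-!
Discard the coordinates forced to vanish, leaving `n = D - m` free ones. Split `u` into its
positive part `p` and its negative part `q`, and fix the set `A` of coordinates where `u` is
positive. Then `p` is a vector of positive integers on `A` with sum at most `s`, which after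
subtracting `1` from every entry is counted by stars and bars as `C(s, |A|)`, and `q` is a vector
of naturals on the complement of `A` with sum at most `t`, counted by stars and bars with one slack
coordinate as `C(n - |A| + t, t)`. Grouping the sets `A` by size gives the formula.
-/

open Finset

theorem Fintype.sum_subtype_of_eq_zero {ι M : Type*} [Fintype ι] [AddCommMonoid M]
    (p : ι → Prop) [DecidablePred p] {f : ι → M} (hf : ∀ i, ¬p i → f i = 0) :
    ∑ i : {i // p i}, f i = ∑ i, f i := by
  rw [← Fintype.sum_subtype_add_sum_subtype p f,
    Finset.sum_eq_zero fun (i : {i // ¬p i}) _ => hf i i.2, add_zero]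

theorem sum_max_zero_eq_sum_toNat {ι : Type*} [Fintype ι] (p : ι → Prop) [DecidablePred p]
    {u : ι → ℤ} (hu : ∀ j, ¬p j → u j ≤ 0) :
    ∑ j, max (u j) 0 = ((∑ j : {j // p j}, (u j).toNat : ℕ) : ℤ) := by
  push_cast
  simp_rw [Int.toNat_eq_max]
  exact (Fintype.sum_subtype_of_eq_zero p fun j hj => max_eq_right (hu j hj)).symm

section StarsAndBars

variable {ι : Type*} [Fintype ι]

def sumLeEquivSumEq (M : ℕ) :
    {f : ι → ℕ // ∑ i, f i ≤ M} ≃ {f : Option ι → ℕ // ∑ i, f i = M} where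
  toFun f := ⟨fun i => i.elim (M - ∑ i, f.1 i) f.1, by
    rw [Fintype.sum_option]; exact Nat.sub_add_cancel f.2⟩
  invFun f := ⟨fun i => f.1 (some i), by
    have := f.2; rw [Fintype.sum_option] at this; show ∑ i, f.1 (some i) ≤ M; omega⟩
  left_inv _ := rfl
  right_inv f := by
    ext (_ | i)
    · have := f.2; rw [Fintype.sum_option] at this; simp only [Option.elim_none]; omega
    · rfl

instance (M : ℕ) : Finite {f : ι → ℕ // ∑ i, f i ≤ M} := by
  classical
  exact .of_equiv _ ((sumLeEquivSumEq M).trans (Sym.equivNatSumOfFintype _ M).symm).symm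

theorem Nat.card_sum_le_eq_choose (M : ℕ) :
    Nat.card {f : ι → ℕ // ∑ i, f i ≤ M} = (Fintype.card ι + M).choose M := by
  classical
  rw [Nat.card_congr ((sumLeEquivSumEq M).trans (Sym.equivNatSumOfFintype _ M).symm),
    Nat.card_eq_fintype_card, Sym.card_sym_eq_choose, Fintype.card_option, Nat.add_right_comm,
    Nat.add_sub_cancel]

theorem sum_sub_one_add_card {f : ι → ℕ} (hf : ∀ i, 0 < f i) :
    ∑ i, (f i - 1) + Fintype.card ι = ∑ i, f i := by
  rw [← Finset.card_univ, Finset.card_eq_sum_ones, ← Finset.sum_add_distrib]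
  exact Finset.sum_congr rfl fun i _ => Nat.sub_add_cancel (hf i)

def posSumLeEquivSumAddCardLe (M : ℕ) :
    {f : ι → ℕ // (∀ i, 0 < f i) ∧ ∑ i, f i ≤ M} ≃
      {g : ι → ℕ // ∑ i, g i + Fintype.card ι ≤ M} where
  toFun f := ⟨fun i => f.1 i - 1, (sum_sub_one_add_card f.2.1).trans_le f.2.2⟩
  invFun g := ⟨fun i => g.1 i + 1, fun i => Nat.succ_pos _,
    (sum_sub_one_add_card fun i => Nat.succ_pos (g.1 i)).symm.trans_le g.2⟩
  left_inv f := by ext i; exact Nat.sub_add_cancel (f.2.1 i)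
  right_inv _ := rfl

instance (M : ℕ) : Finite {f : ι → ℕ // (∀ i, 0 < f i) ∧ ∑ i, f i ≤ M} :=
  .of_injective (Subtype.map (q := fun f => ∑ i, f i ≤ M) id fun _ h => h.2)
    (Subtype.map_injective _ Function.injective_id)

theorem Nat.card_pos_sum_le_eq_choose (M : ℕ) :
    Nat.card {f : ι → ℕ // (∀ i, 0 < f i) ∧ ∑ i, f i ≤ M} = M.choose (Fintype.card ι) := by
  rw [Nat.card_congr (posSumLeEquivSumAddCardLe M)]
  rcases le_or_gt (Fintype.card ι) M with h | h
  · rw [Nat.card_congr (Equiv.subtypeEquivRight fun g => (Nat.le_sub_iff_add_le h).symm),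
      Nat.card_sum_le_eq_choose, Nat.add_sub_cancel' h, Nat.choose_symm h]
  · rw [Nat.choose_eq_zero_of_lt h, Nat.card_eq_zero]
    exact .inl ⟨fun g => by have := g.2; omega⟩

end StarsAndBars

/-- The set `I_{s,t,0}` of the paper, with coordinates indexed by an arbitrary finite type. -/
def posNegL1Ball (ι : Type*) [Fintype ι] (s t : ℕ) : Set (ι → ℤ) :=
  {u | ∑ j, max (u j) 0 ≤ s ∧ ∑ j, max (-u j) 0 ≤ t}

section PosNegL1Ball

variable {ι : Type*} [Fintype ι] {s t : ℕ}

theorem mem_posNegL1Ball_iff_of_pos_iff [DecidableEq ι] {u : ι → ℤ} {A : Finset ι}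
    (hA : ∀ j, 0 < u j ↔ j ∈ A) :
    u ∈ posNegL1Ball ι s t ↔
      ∑ j : A, (u j).toNat ≤ s ∧ ∑ j : {j // j ∉ A}, (-u j).toNat ≤ t := by
  rw [posNegL1Ball, Set.mem_ofPred_eq,
    sum_max_zero_eq_sum_toNat (· ∈ A) fun j hj => not_lt.1 ((hA j).not.2 hj),
    sum_max_zero_eq_sum_toNat (· ∉ A) fun j hj => by have := (hA j).2 (not_not.1 hj); omega]
  norm_cast
  -- the two `Fintype` instances on `↥A` (as a subtype and as a finset) differ
  convert Iff.rfl

def posNegL1BallFiberEquiv [DecidableEq ι] (A : Finset ι) :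
    {u : ι → ℤ // u ∈ posNegL1Ball ι s t ∧ ∀ j, 0 < u j ↔ j ∈ A} ≃
      {p : A → ℕ // (∀ i, 0 < p i) ∧ ∑ i, p i ≤ s} ×
        {q : {j // j ∉ A} → ℕ // ∑ i, q i ≤ t} where
  toFun u :=
    have hu := (mem_posNegL1Ball_iff_of_pos_iff u.2.2).1 u.2.1
    (⟨fun j => (u.1 j).toNat, fun j => Int.lt_toNat.2 ((u.2.2 j).2 j.2), hu.1⟩,
      ⟨fun j => (-u.1 j).toNat, hu.2⟩)
  invFun pq :=
    let u : ι → ℤ := fun j => if h : j ∈ A then pq.1.1 ⟨j, h⟩ else -pq.2.1 ⟨j, h⟩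
    have hA : ∀ j, 0 < u j ↔ j ∈ A := by
      intro j
      by_cases h : j ∈ A
      · simpa [u, h] using pq.1.2.1 ⟨j, h⟩
      · simp [u, h]
    have hc : ∀ j : {j // j ∉ A}, (j : ι) ∉ A := fun j => j.2
    ⟨u, (mem_posNegL1Ball_iff_of_pos_iff hA).2 (by simpa [u, hc] using ⟨pq.1.2.2, pq.2.2⟩), hA⟩
  left_inv u := by
    ext j
    by_cases h : j ∈ A
    · simpa [h] using ((u.2.2 j).2 h).le
    · have := not_lt.1 ((u.2.2 j).not.2 h)
      simp [h]
      omega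
  right_inv pq := by
    have hc : ∀ j : {j // j ∉ A}, (j : ι) ∉ A := fun j => j.2
    ext <;> simp [hc]

theorem ncard_posNegL1Ball :
    (posNegL1Ball ι s t).ncard = ∑ i ∈ range (Fintype.card ι + 1),
      (Fintype.card ι).choose i * s.choose i * (Fintype.card ι - i + t).choose t := by
  classical
  let posSet (u : posNegL1Ball ι s t) : Finset ι := univ.filter fun j => 0 < u.1 j
  let fiberEquiv (A : Finset ι) := calc
    {u // posSet u = A} ≃ {u : posNegL1Ball ι s t // ∀ j, 0 < u.1 j ↔ j ∈ A} :=
      Equiv.subtypeEquivRight fun u => by simp [posSet, Finset.ext_iff]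
    _ ≃ {u : ι → ℤ // u ∈ posNegL1Ball ι s t ∧ ∀ j, 0 < u j ↔ j ∈ A} :=
      Equiv.subtypeSubtypeEquivSubtypeInter (· ∈ posNegL1Ball ι s t)
        fun u => ∀ j, 0 < u j ↔ j ∈ A
    _ ≃ _ := posNegL1BallFiberEquiv A
  have : ∀ A, Finite {u // posSet u = A} := fun A => .of_equiv _ (fiberEquiv A).symm
  have hfiber (A : Finset ι) :
      Nat.card {u // posSet u = A} = s.choose #A * (Fintype.card ι - #A + t).choose t := by
    rw [Nat.card_congr (fiberEquiv A), Nat.card_prod, Nat.card_pos_sum_le_eq_choose,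
      Nat.card_sum_le_eq_choose, Fintype.card_coe, Fintype.card_subtype_compl, Fintype.card_coe]
  rw [← Nat.card_coe_set_eq, ← Nat.card_congr (Equiv.sigmaFiberEquiv posSet), Nat.card_sigma]
  simp_rw [hfiber]
  rw [← powerset_univ,
    sum_powerset_apply_card (fun i => s.choose i * (Fintype.card ι - i + t).choose t), card_univ]
  simp [mul_assoc]

theorem mem_posNegL1Ball_iff_restrict {p : ι → Prop} [DecidablePred p] {u : ι → ℤ}
    (hu : ∀ j, p j → u j = 0) :
    u ∈ posNegL1Ball ι s t ↔ (fun j : {j // ¬p j} => u j) ∈ posNegL1Ball _ s t := by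
  have hsum (g : ℤ → ℤ) (hg : g 0 = 0) : ∑ j, g (u j) = ∑ j : {j // ¬p j}, g (u j) :=
    (Fintype.sum_subtype_of_eq_zero _ fun j hj => by rw [hu j (not_not.1 hj), hg]).symm
  simp only [posNegL1Ball, Set.mem_ofPred_eq]
  rw [hsum (max · 0) (by simp), hsum (fun x => max (-x) 0) (by simp)]

theorem ncard_posNegL1Ball_of_vanishing (p : ι → Prop) [DecidablePred p] :
    {u : ι → ℤ | (∀ j, p j → u j = 0) ∧ u ∈ posNegL1Ball ι s t}.ncard =
      (posNegL1Ball {j // ¬p j} s t).ncard := by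
  have hv : ∀ j : {j // ¬p j}, ¬p j := fun j => j.2
  refine Nat.card_congr
    { toFun u := ⟨fun j => u.1 j, (mem_posNegL1Ball_iff_restrict u.2.1).1 u.2.2⟩
      invFun v := ⟨fun j => if h : p j then 0 else v.1 ⟨j, h⟩,
        fun j hj => dif_pos hj,
        (mem_posNegL1Ball_iff_restrict fun j hj => dif_pos hj).2 (by simp [hv])⟩
      left_inv u := ?_
      right_inv v := by ext j; simp [hv] }
  ext j
  by_cases hj : p j
  · simp [hj, u.2.1 j hj]
  · simp [hj]

end PosNegL1Ball

theorem stmt_11_general (D m : ℕ) (s t : ℕ) :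
    Set.ncard {u : Fin D → ℤ |
        (∀ j : Fin D, (j : ℕ) < m → u j = 0) ∧
        (∑ j, max (u j) 0) ≤ (s : ℤ) ∧
        (∑ j, max (-u j) 0) ≤ (t : ℤ)}
      = ∑ i ∈ Finset.range (D - m + 1),
          (D - m).choose i * s.choose i * (D - m - i + t).choose t := by
  have hcard : Fintype.card {j : Fin D // ¬(j : ℕ) < m} = D - m := by
    rw [Fintype.card_subtype_compl, Fintype.card_subtype, Fin.card_filter_val_lt,
      Fintype.card_fin]
    omega
  rw [← hcard, ← ncard_posNegL1Ball]
  exact ncard_posNegL1Ball_of_vanishing _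

theorem stmt_11 (D m : ℕ) (s t : ℕ) (hm : m < D) :
    Set.ncard {u : Fin D → ℤ |
        (∀ j : Fin D, (j : ℕ) < m → u j = 0) ∧
        (∑ j, max (u j) 0) ≤ (s : ℤ) ∧
        (∑ j, max (-u j) 0) ≤ (t : ℤ)}
      = ∑ i ∈ Finset.range (D - m + 1),
          (D - m).choose i * s.choose i * (D - m - i + t).choose t :=
  stmt_11_general D m s t
end

section
/- The identity Σ_{i=0}^{R} C(R,i)² = C(2R, R) holds for every natural number R (Vandermonde), and combined with the bound min over i of [C(R−i+t,R)+C(i+t,R)]/2 ≥ C(⌊R/2⌋+t, R) (for t ≥ R/2, by convexity), yields Σ_{i=0}^{R} C(R,i)²·C(R−i+t, R) ≥ C(⌊R/2⌋+t, R)·C(2R, R). -/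
lemma convex_choose (R m : ℕ) : ∀ d ≤ m,
    2 * m.choose R ≤ (m - d).choose R + (m + d).choose R := by
  cases R with
  | zero => intro d _; simp [Nat.choose_zero_right]
  | succ r =>
    intro d
    induction d with
    | zero => intro _; simp; omega
    | succ d ih =>
      intro hd
      have h1 := ih (by omega)
      have e1 : m - d = (m - (d + 1)) + 1 := by omega
      have e2 : m + (d + 1) = (m + d) + 1 := by omega
      rw [e1, Nat.choose_succ_succ'] at h1
      rw [e2, Nat.choose_succ_succ']
      have hmono : (m - (d + 1)).choose r ≤ (m + d).choose r :=
        Nat.choose_le_choose r (by omega)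
      omega

lemma pair_bound (R t i : ℕ) (hi : i ≤ R) :
    2 * ((R / 2 + t).choose R) ≤ (R - i + t).choose R + (i + t).choose R := by
  rcases le_or_gt i (R / 2) with h | h
  · have key := convex_choose R (R / 2 + t) (R / 2 - i) (by omega)
    have e1 : R / 2 + t - (R / 2 - i) = i + t := by omega
    rw [e1] at key
    have hmono : (R / 2 + t + (R / 2 - i)).choose R ≤ (R - i + t).choose R :=
      Nat.choose_le_choose R (by omega)
    omega
  · have key := convex_choose R (R / 2 + t) (i - (R - R / 2)) (by omega)
    have e1 : R / 2 + t - (i - (R - R / 2)) = R - i + t := by omega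
    rw [e1] at key
    have hmono : (R / 2 + t + (i - (R - R / 2))).choose R ≤ (i + t).choose R :=
      Nat.choose_le_choose R (by omega)
    omega

theorem stmt_15 (R t : ℕ) (ht : R ≤ 2 * t) :
    (∑ i ∈ Finset.range (R + 1), (R.choose i) ^ 2 = (2 * R).choose R) ∧
    (∑ i ∈ Finset.range (R + 1), (R.choose i) ^ 2 * (R - i + t).choose R
      ≥ (R / 2 + t).choose R * (2 * R).choose R) := by
  have hvdm : ∑ i ∈ Finset.range (R + 1), (R.choose i) ^ 2 = (2 * R).choose R := by
    rw [two_mul, Nat.add_choose_eq, Finset.Nat.sum_antidiagonal_eq_sum_range_succ_mk]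
    refine Finset.sum_congr rfl fun i hi => ?_
    rw [Finset.mem_range] at hi
    rw [Nat.choose_symm (by omega : i ≤ R), sq]
  refine ⟨hvdm, ?_⟩
  -- reflect the sum
  have hrefl : ∑ i ∈ Finset.range (R + 1), (R.choose i) ^ 2 * (R - i + t).choose R
      = ∑ i ∈ Finset.range (R + 1), (R.choose i) ^ 2 * (i + t).choose R := by
    conv_rhs => rw [← Finset.sum_range_reflect]
    refine Finset.sum_congr rfl fun i hi => ?_
    rw [Finset.mem_range] at hi
    have h1 : R + 1 - 1 - i = R - i := by omega
    rw [h1, Nat.choose_symm (by omega : i ≤ R)]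
  have key : 2 * ((R / 2 + t).choose R * (2 * R).choose R)
      ≤ 2 * ∑ i ∈ Finset.range (R + 1), (R.choose i) ^ 2 * (R - i + t).choose R := by
    calc 2 * ((R / 2 + t).choose R * (2 * R).choose R)
        = ∑ i ∈ Finset.range (R + 1), (R.choose i) ^ 2 * (2 * (R / 2 + t).choose R) := by
          rw [← Finset.sum_mul, hvdm]; ring
      _ ≤ ∑ i ∈ Finset.range (R + 1),
            (R.choose i) ^ 2 * ((R - i + t).choose R + (i + t).choose R) := by
          refine Finset.sum_le_sum fun i hi => ?_
          rw [Finset.mem_range] at hi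
          exact Nat.mul_le_mul_left _ (pair_bound R t i (by omega))
      _ = 2 * ∑ i ∈ Finset.range (R + 1), (R.choose i) ^ 2 * (R - i + t).choose R := by
          simp only [Nat.mul_add]
          rw [Finset.sum_add_distrib, ← hrefl, ← two_mul]
  omega
end
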